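/- Let A be a Hermitian positive definite matrix on a finite set E with K := A(I+A)⁻¹. For any Λ ⊆ E and any configuration X ⊆ Λ, the marginal probability satisfies: det(I_Λ − K_Λ) · det(A_{[Λ]}(X,X)) = det( P_X K_Λ + P_{Λ\X}(I_Λ − K_Λ) ), where A_{[Λ]} = K_Λ(I_Λ−K_Λ)⁻¹ and P_S denotes the diagonal projection onto coordinates in S. -/

import Mathlib

/-!
Since `1 - K = (1 + A)⁻¹` is positive definite, so is its compression `1 - K_Λ`, which is therefore
invertible. Factoring it out on the right gives
`P_X K_Λ + P_{Λ∖X} (1 - K_Λ) = (P_X A_[Λ] + P_{Λ∖X}) (1 - K_Λ)`, and the first factor is block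
upper triangular with diagonal blocks `A_[Λ](X, X)` and the identity.
-/

open Matrix ComplexOrder

namespace Matrix

variable {n R : Type*} [Fintype n] [DecidableEq n] [CommRing R]

theorem det_diagonal_ite_mul_add_diagonal_ite (p : n → Prop) [DecidablePred p]
    (M : Matrix n n R) :
    (diagonal (fun i => if p i then 1 else 0) * M + diagonal (fun i => if p i then 0 else 1)).det
      = (M.submatrix (↑) (↑) : Matrix {i // p i} {i // p i} R).det := by
  have hne : ∀ (i : {i // ¬p i}) (j : {j // p j}), (i : n) ≠ j := fun i j h => i.2 (h ▸ j.2)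
  have hblocks : (diagonal (fun i => if p i then 1 else 0) * M
      + diagonal (fun i => if p i then 0 else 1)).submatrix (Equiv.sumCompl p) (Equiv.sumCompl p)
      = fromBlocks (M.submatrix (↑) (↑)) (M.submatrix (↑) (↑)) 0 1 := by
    ext (i | i) (j | j) <;>
      simp [diagonal_mul, diagonal_apply, one_apply, i.2, hne, Subtype.ext_iff]
  rw [← det_submatrix_equiv_self (Equiv.sumCompl p), hblocks, det_fromBlocks_zero₂₁, det_one,
    mul_one]

theorem one_sub_mul_inv_one_add {A : Matrix n n R} (h : IsUnit (1 + A).det) :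
    1 - A * (1 + A)⁻¹ = (1 + A)⁻¹ := by
  calc 1 - A * (1 + A)⁻¹ = (1 + A) * (1 + A)⁻¹ - A * (1 + A)⁻¹ := by rw [mul_nonsing_inv _ h]
    _ = (1 + A)⁻¹ := by rw [← sub_mul, add_sub_cancel_right, one_mul]

theorem det_diagonal_ite_mul_add_diagonal_ite_mul_one_sub (p : n → Prop) [DecidablePred p]
    {L : Matrix n n R} (hL : IsUnit (1 - L).det) :
    (diagonal (fun i => if p i then 1 else 0) * L
        + diagonal (fun i => if p i then 0 else 1) * (1 - L)).det
      = (1 - L).det * ((L * (1 - L)⁻¹).submatrix (↑) (↑) : Matrix {i // p i} {i // p i} R).det := by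
  have hfactor : diagonal (fun i => if p i then 1 else 0) * L
        + diagonal (fun i => if p i then 0 else 1) * (1 - L)
      = (diagonal (fun i => if p i then 1 else 0) * (L * (1 - L)⁻¹)
        + diagonal (fun i => if p i then 0 else 1)) * (1 - L) := by
    rw [add_mul, mul_assoc, mul_assoc, nonsing_inv_mul _ hL, mul_one]
  rw [hfactor, det_mul, det_diagonal_ite_mul_add_diagonal_ite, mul_comm]

end Matrix

theorem stmt_15 {E : Type*} [Fintype E] [DecidableEq E]
    (A : Matrix E E ℂ) (hA : A.PosDef)
    (K : Matrix E E ℂ) (hK : K = A * (1 + A)⁻¹)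
    (Λ X : Finset E) (hXΛ : X ⊆ Λ)
    (KΛ : Matrix ↥Λ ↥Λ ℂ)
    (hKΛ : KΛ = K.submatrix (fun i : ↥Λ => (i : E)) (fun i : ↥Λ => (i : E))) :
    (1 - KΛ).det * ((KΛ * (1 - KΛ)⁻¹).submatrix
        (fun i : ↥X => (⟨(i : E), hXΛ i.2⟩ : ↥Λ)) (fun i : ↥X => (⟨(i : E), hXΛ i.2⟩ : ↥Λ))).det
    = (Matrix.diagonal (fun i : ↥Λ => if (i : E) ∈ X then (1 : ℂ) else 0) * KΛ
        + Matrix.diagonal (fun i : ↥Λ => if (i : E) ∈ X then (0 : ℂ) else 1) * (1 - KΛ)).det := by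
  have hoA : (1 + A).PosDef := PosDef.one.add hA
  have hcompl : 1 - KΛ = ((1 + A)⁻¹).submatrix (↑) (↑) := by
    rw [← one_sub_mul_inv_one_add hoA.det_pos.ne'.isUnit, ← hK, hKΛ,
      ← submatrix_one ((↑) : Λ → E) Subtype.coe_injective]
    rfl
  have hunit : IsUnit (1 - KΛ).det := by
    rw [hcompl]
    exact (hoA.inv.submatrix Subtype.coe_injective).det_pos.ne'.isUnit
  rw [det_diagonal_ite_mul_add_diagonal_ite_mul_one_sub (fun i : Λ => (i : E) ∈ X) hunit,
    ← det_submatrix_equiv_self (Equiv.subtypeSubtypeEquivSubtype fun hx => hXΛ hx).symm]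
  rfl
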